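/- arXiv:2008.12297 — 5 statements merged into one kernel-verified Lean document; each statement's English description precedes it below -/
import Mathlib

section
/- For any permutation pattern σ of length k ≥ 2, the consecutive-σ-avoiding stack-sorting map satisfies SC_{comp(σ)} = comp ∘ SC_σ ∘ comp, where comp is the complementation map on permutations. -/
open List Finset

attribute [local instance] Classical.propDecidable

/-- Two lists (with distinct entries) have the same relative order. -/
def SameRel (u v : List ℕ) : Prop :=
  u.length = v.length ∧ ∀ i j, i < j → j < u.length →
    (u.getD i 0 < u.getD j 0 ↔ v.getD i 0 < v.getD j 0)

/-- `l` contains `σ` as a classical pattern. -/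
def ContainsPat (l σ : List ℕ) : Prop := ∃ u, u.Sublist l ∧ SameRel u σ

/-- `l` contains `σ` as a consecutive pattern. -/
def ContainsC (l σ : List ℕ) : Prop := ∃ u, u.IsInfix l ∧ SameRel u σ

/-- `l` avoids `σ` as a classical pattern. -/
def AvoidsPat (l σ : List ℕ) : Prop := ¬ ContainsPat l σ

/-- `l` avoids `σ` as a consecutive pattern. -/
def AvoidsC (l σ : List ℕ) : Prop := ¬ ContainsC l σ

/-- Generic right-greedy stack-sorting: push the next entry unless doing so creates a
`bad` stack (read top to bottom); otherwise pop the top of the stack to the output. -/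
noncomputable def stackAux (bad : List ℕ → Prop) : List ℕ → List ℕ → List ℕ → List ℕ
  | [], stack, out => out ++ stack
  | a :: rest, stack, out =>
    if bad (a :: stack) then
      match stack with
      | [] => stackAux bad rest [a] out
      | b :: s => stackAux bad (a :: rest) s (out ++ [b])
    else stackAux bad rest (a :: stack) out
  termination_by i s _ => 2 * i.length + s.length
  decreasing_by all_goals (first | omega | (simp [List.length_cons]; try omega))

noncomputable def SCgen (bad : List ℕ → Prop) (π : List ℕ) : List ℕ := stackAux bad π [] []

/-- The consecutive-`σ`-avoiding stack-sorting map. -/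
noncomputable def SCc (σ : List ℕ) : List ℕ → List ℕ := SCgen (fun l => ContainsC l σ)

/-- The classical-`σ`-avoiding stack-sorting map. -/
noncomputable def sCl (σ : List ℕ) : List ℕ → List ℕ := SCgen (fun l => ContainsPat l σ)

/-- `π` is (the one-line notation of) a permutation of `{1, …, n}`. -/
def IsPermList (n : ℕ) (π : List ℕ) : Prop := π.Perm ((List.range n).map (· + 1))

/-- Complementation on permutations of `{1, …, n}`. -/
def compl (n : ℕ) (π : List ℕ) : List ℕ := π.map (fun x => n + 1 - x)

/-- The finset of permutations of `{1, …, n}` in one-line notation. -/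
def permsFinset (n : ℕ) : Finset (List ℕ) := ((List.range n).map (· + 1)).permutations.toFinset

/-- The number of preimages of `π` in `S_n` under `f`. -/
noncomputable def preCount (f : List ℕ → List ℕ) (n : ℕ) (π : List ℕ) : ℕ :=
  ((permsFinset n).filter (fun τ => f τ = π)).card

/-!
Complementation `x ↦ n + 1 - x` reverses the order of `{1, …, n}`, so a stack contains `σ`
consecutively exactly when its complement contains `comp(σ)`. Hence the two stack-sorting
runs, on `τ` with forbidden pattern `σ` and on `comp(τ)` with `comp(σ)`, make the same push and
pop decisions step by step, and their outputs are complements of each other.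
-/

section StackSorting

variable {bad : List ℕ → Prop}

theorem stackAux_cons_nil (a : ℕ) (rest out : List ℕ) :
    stackAux bad (a :: rest) [] out = stackAux bad rest [a] out := by
  simp [stackAux.eq_2]

theorem stackAux_cons_cons_of_bad {a b : ℕ} {rest s : List ℕ} (out : List ℕ)
    (hbad : bad (a :: b :: s)) :
    stackAux bad (a :: rest) (b :: s) out = stackAux bad (a :: rest) s (out ++ [b]) := by
  simp [stackAux.eq_3, hbad]

theorem stackAux_cons_of_not_bad {a : ℕ} {rest stack : List ℕ} (out : List ℕ)
    (hgood : ¬ bad (a :: stack)) :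
    stackAux bad (a :: rest) stack out = stackAux bad rest (a :: stack) out := by
  cases stack <;> simp [stackAux.eq_2, stackAux.eq_3, hgood]

variable {bad₁ bad₂ : List ℕ → Prop} {f : ℕ → ℕ} {L : List ℕ}

/-- The invariant `stack ++ inp <+~ L` says that every stack occurring while sorting `L` is a
subpermutation of `L`, so `f` only has to carry `bad₁` to `bad₂` on those. -/
theorem stackAux_map (h : ∀ l, l <+~ L → (bad₁ l ↔ bad₂ (l.map f)))
    (inp stack out : List ℕ) (hL : stack ++ inp <+~ L) :
    stackAux bad₂ (inp.map f) (stack.map f) (out.map f) = (stackAux bad₁ inp stack out).map f := by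
  induction inp, stack, out using stackAux.induct bad₁ with
  | case1 stack out => simp [stackAux.eq_1]
  | case2 a rest out _ ih =>
    simpa [stackAux_cons_nil] using ih (by simpa using hL)
  | case3 a rest out b s hbad ih =>
    have hpush : (a :: b :: s) ++ rest <+~ L := perm_middle.symm.subperm.trans hL
    have hbad₂ : bad₂ ((a :: b :: s).map f) :=
      (h _ ((sublist_append_left _ _).subperm.trans hpush)).1 hbad
    have hpop : s ++ a :: rest <+~ L := ((sublist_cons_self b _).append_right _).subperm.trans hL
    rw [stackAux_cons_cons_of_bad out hbad, ← ih hpop, List.map_cons, List.map_cons,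
      stackAux_cons_cons_of_bad _ hbad₂, List.map_append, List.map_singleton]
  | case4 a rest stack out hgood ih =>
    have hpush : (a :: stack) ++ rest <+~ L := perm_middle.symm.subperm.trans hL
    have hgood₂ : ¬ bad₂ ((a :: stack).map f) :=
      mt (h _ ((sublist_append_left _ _).subperm.trans hpush)).2 hgood
    rw [stackAux_cons_of_not_bad out hgood, ← ih hpush, List.map_cons,
      stackAux_cons_of_not_bad _ hgood₂, List.map_cons]

theorem SCgen_map (h : ∀ l, l <+~ L → (bad₁ l ↔ bad₂ (l.map f))) :
    SCgen bad₂ (L.map f) = (SCgen bad₁ L).map f := by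
  simpa [SCgen] using stackAux_map h L [] [] (Subperm.refl L)

end StackSorting

section PatternComplement

variable {u v : List ℕ} {f g : ℕ → ℕ}

theorem getD_map_lt_getD_map_iff_of_strictAntiOn (hu : u.Nodup)
    (hf : StrictAntiOn f {x | x ∈ u}) {i j : ℕ} (hij : i < j) (hj : j < u.length) :
    (u.map f).getD i 0 < (u.map f).getD j 0 ↔ ¬ u.getD i 0 < u.getD j 0 := by
  have hi : i < u.length := hij.trans hj
  have hne : u[i] ≠ u[j] := fun heq => hij.ne (hu.getElem_inj_iff.1 heq)
  rw [getD_eq_getElem (u.map f) 0 (by simpa using hi),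
    getD_eq_getElem (u.map f) 0 (by simpa using hj), getElem_map, getElem_map,
    getD_eq_getElem u 0 hi, getD_eq_getElem u 0 hj,
    hf.lt_iff_gt (getElem_mem hi) (getElem_mem hj)]
  omega

theorem sameRel_map_map_iff (hu : u.Nodup) (hv : v.Nodup) (hf : StrictAntiOn f {x | x ∈ u})
    (hg : StrictAntiOn g {x | x ∈ v}) :
    SameRel (u.map f) (v.map g) ↔ SameRel u v := by
  simp only [SameRel, length_map]
  refine and_congr_right fun hlen => forall₄_congr fun i j hij hj => ?_
  rw [getD_map_lt_getD_map_iff_of_strictAntiOn hu hf hij hj,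
    getD_map_lt_getD_map_iff_of_strictAntiOn hv hg hij (hlen ▸ hj), not_iff_not]

theorem containsC_map_map_iff (hu : u.Nodup) (hv : v.Nodup) (hf : StrictAntiOn f {x | x ∈ u})
    (hg : StrictAntiOn g {x | x ∈ v}) :
    ContainsC (u.map f) (v.map g) ↔ ContainsC u v := by
  constructor
  · rintro ⟨w', hw', hrel⟩
    obtain ⟨w, hw, rfl⟩ := infix_map_iff.1 hw'
    exact ⟨w, hw, (sameRel_map_map_iff (hu.sublist hw.sublist) hv
      (hf.mono fun x hx => hw.subset hx) hg).1 hrel⟩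
  · rintro ⟨w, hw, hrel⟩
    exact ⟨w.map f, hw.map f, (sameRel_map_map_iff (hu.sublist hw.sublist) hv
      (hf.mono fun x hx => hw.subset hx) hg).2 hrel⟩

end PatternComplement

section Complement

variable {n : ℕ} {π : List ℕ}

theorem strictAntiOn_compl_Icc : StrictAntiOn (fun x => n + 1 - x) (Set.Icc 1 n) :=
  fun x _ y hy hxy => by
    simp only [Set.mem_Icc] at hy
    dsimp only
    omega

theorem isPermList_iff : IsPermList n π ↔ π.Nodup ∧ ∀ x, x ∈ π ↔ x ∈ Set.Icc 1 n := by
  have hnodup : ((List.range n).map (· + 1)).Nodup := List.nodup_range.map (add_left_injective 1)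
  have hmem : ∀ x, x ∈ (List.range n).map (· + 1) ↔ x ∈ Set.Icc 1 n := fun x => by
    simp only [List.mem_map, List.mem_range, Set.mem_Icc]
    exact ⟨by rintro ⟨y, hy, rfl⟩; omega, fun hx => ⟨x - 1, by omega, by omega⟩⟩
  refine ⟨fun h => ⟨h.nodup_iff.2 hnodup, fun x => h.mem_iff.trans (hmem x)⟩, ?_⟩
  rintro ⟨hπ, hπmem⟩
  exact (perm_ext_iff_of_nodup hπ hnodup).2 fun x => (hπmem x).trans (hmem x).symm

theorem IsPermList.subset_Icc (hπ : IsPermList n π) : {x | x ∈ π} ⊆ Set.Icc 1 n :=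
  fun x hx => ((isPermList_iff.1 hπ).2 x).1 hx

theorem isPermList_compl (hπ : IsPermList n π) : IsPermList n (compl n π) := by
  obtain ⟨hnodup, hmem⟩ := isPermList_iff.1 hπ
  refine isPermList_iff.2 ⟨hnodup.map_on fun x hx y hy => ?_, fun x => ?_⟩
  · exact strictAntiOn_compl_Icc.injOn (hπ.subset_Icc hx) (hπ.subset_Icc hy)
  · simp only [compl.eq_1, List.mem_map, hmem, Set.mem_Icc]
    exact ⟨by rintro ⟨y, hy, rfl⟩; omega, fun hx => ⟨n + 1 - x, by omega, by omega⟩⟩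

theorem compl_compl_of_isPermList (hπ : IsPermList n π) : compl n (compl n π) = π := by
  rw [compl.eq_1, compl.eq_1, List.map_map]
  refine (List.map_congr_left fun x hx => ?_).trans (List.map_id π)
  obtain ⟨-, hxn⟩ := hπ.subset_Icc hx
  simp only [Function.comp_apply, id]
  omega

theorem SCc_compl_compl {k : ℕ} {σ τ : List ℕ} (hσ : IsPermList k σ) (hτ : IsPermList n τ) :
    SCc (compl k σ) (compl n τ) = compl n (SCc σ τ) := by
  refine SCgen_map fun l hl => (containsC_map_map_iff ?_ ?_ ?_ ?_).symm
  · obtain ⟨l', hperm, hsub⟩ := hl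
    exact hperm.nodup_iff.1 ((isPermList_iff.1 hτ).1.sublist hsub)
  · exact (isPermList_iff.1 hσ).1
  · exact strictAntiOn_compl_Icc.mono fun x hx => hτ.subset_Icc (hl.subset hx)
  · exact strictAntiOn_compl_Icc.mono hσ.subset_Icc

end Complement

theorem sc_comp_conjugate_general (k : ℕ) (σ : List ℕ) (hσ : IsPermList k σ)
    (n : ℕ) (π : List ℕ) (hπ : IsPermList n π) :
    SCc (compl k σ) π = compl n (SCc σ (compl n π)) := by
  rw [← SCc_compl_compl hσ (isPermList_compl hπ), compl_compl_of_isPermList hπ]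

/-- For σ ∈ S_k (k ≥ 2), SC_{comp(σ)} = comp ∘ SC_σ ∘ comp on each S_n. -/
theorem sc_comp_conjugate (k : ℕ) (hk : 2 ≤ k) (σ : List ℕ) (hσ : IsPermList k σ)
    (n : ℕ) (π : List ℕ) (hπ : IsPermList n π) :
    SCc (compl k σ) π = compl n (SCc σ (compl n π)) :=
  sc_comp_conjugate_general k σ hσ n π hπ
end

section
/- If a permutation π avoids rev(σ) as a consecutive pattern, then SC_σ(π) = rev(π), the reverse of π. -/
/-!
If `π` avoids `rev σ` consecutively, no stack that the greedy algorithm could build — a suffix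
of `rev π`, read top to bottom — contains `σ` consecutively, since reversing it would exhibit
`rev σ` inside `π` (reversal preserves consecutive pattern containment for lists of distinct
entries). So the algorithm never pops before the input is exhausted: it pushes all of `π` and
then empties the stack, producing `rev π`.
-/

open List Finset

attribute [local instance] Classical.propDecidable

lemma IsPermList.nodup {n : ℕ} {π : List ℕ} (hπ : IsPermList n π) : π.Nodup :=
  hπ.nodup_iff.mpr <| nodup_range.map fun _ _ => Nat.succ.inj

lemma List.getD_reverse_of_lt {α : Type*} {l : List α} {m : ℕ} (d : α) (hm : m < l.length) :
    l.reverse.getD m d = l.getD (l.length - 1 - m) d := by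
  rw [getD_eq_getElem _ _ (by simpa using hm), getD_eq_getElem _ _ (by omega), getElem_reverse]

lemma List.Nodup.getD_ne {α : Type*} {l : List α} (hl : l.Nodup) (d : α) {i j : ℕ} (hij : i ≠ j)
    (hj : j < l.length) (hi : i < l.length) : l.getD i d ≠ l.getD j d := by
  rw [getD_eq_getElem _ _ hi, getD_eq_getElem _ _ hj]
  exact mt hl.getElem_inj_iff.mp hij

lemma SameRel.reverse {u v : List ℕ} (hu : u.Nodup) (hv : v.Nodup) (h : SameRel u v) :
    SameRel u.reverse v.reverse := by
  obtain ⟨hlen, hrel⟩ := h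
  refine ⟨by simp [hlen], fun i j hij hj => ?_⟩
  rw [length_reverse] at hj
  have hi : i < u.length := hij.trans hj
  rw [getD_reverse_of_lt 0 hi, getD_reverse_of_lt 0 hj, getD_reverse_of_lt 0 (hlen ▸ hi),
    getD_reverse_of_lt 0 (hlen ▸ hj), ← hlen]
  -- with distinct entries, `x < y ↔ x' < y'` forces `y < x ↔ y' < x'`
  have hrel' := hrel (u.length - 1 - j) (u.length - 1 - i) (by omega) (by omega)
  have hune := hu.getD_ne 0 (i := u.length - 1 - j) (j := u.length - 1 - i) (by omega) (by omega)
    (by omega)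
  have hvne := hv.getD_ne 0 (i := u.length - 1 - j) (j := u.length - 1 - i) (by omega) (by omega)
    (by omega)
  omega

lemma ContainsC.mono {l l' σ : List ℕ} (h : ContainsC l σ) (hl : l <:+: l') : ContainsC l' σ :=
  let ⟨u, hu, hrel⟩ := h
  ⟨u, hu.trans hl, hrel⟩

lemma ContainsC.reverse {l σ : List ℕ} (hl : l.Nodup) (hσ : σ.Nodup) (h : ContainsC l σ) :
    ContainsC l.reverse σ.reverse :=
  let ⟨u, hu, hrel⟩ := h
  ⟨u.reverse, reverse_infix.mpr hu, hrel.reverse (hl.sublist hu.sublist) hσ⟩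

lemma stackAux_eq_of_forall_suffix_not_bad (bad : List ℕ → Prop) :
    ∀ rest stack out : List ℕ, (∀ l, l <:+ rest.reverse ++ stack → ¬ bad l) →
      stackAux bad rest stack out = out ++ rest.reverse ++ stack
  | [], stack, out, _ => by rw [stackAux]; simp
  | a :: rest, stack, out, h => by
    have hpush : ¬ bad (a :: stack) := h _ ⟨rest.reverse, by simp⟩
    rw [stackAux.eq_def]
    simp only [if_neg hpush]
    rw [stackAux_eq_of_forall_suffix_not_bad bad rest (a :: stack) out (by simpa using h)]
    simp

lemma SCgen_eq_reverse (bad : List ℕ → Prop) (π : List ℕ) (h : ∀ l, l <:+ π.reverse → ¬ bad l) :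
    SCgen bad π = π.reverse := by
  simpa [SCgen] using stackAux_eq_of_forall_suffix_not_bad bad π [] [] (by simpa using h)

theorem sc_of_avoids_rev_general (k : ℕ) (σ : List ℕ) (hσ : IsPermList k σ)
    (n : ℕ) (π : List ℕ) (hπ : IsPermList n π) (h : AvoidsC π σ.reverse) :
    SCc σ π = π.reverse := by
  refine SCgen_eq_reverse _ π fun l hl hbad => h ?_
  simpa using (hbad.mono hl.isInfix).reverse (nodup_reverse.mpr hπ.nodup) hσ.nodup

/-- If π avoids rev(σ) as a consecutive pattern, then SC_σ(π) = rev(π). -/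
theorem sc_of_avoids_rev (k : ℕ) (hk : 2 ≤ k) (σ : List ℕ) (hσ : IsPermList k σ)
    (n : ℕ) (π : List ℕ) (hπ : IsPermList n π) (h : AvoidsC π σ.reverse) :
    SCc σ π = π.reverse :=
  sc_of_avoids_rev_general k σ hσ n π hπ h
end

section
/- The set Sort(SC_{12}) of permutations π with SC_{12}(π) avoiding the classical pattern 231 is exactly the set Av(213) of permutations classically avoiding 213. -/
open List Finset

attribute [local instance] Classical.propDecidable

/-! With distinct entries the stack of `SC_{12}` increases from bottom to top, so the minimum `m`
of `π = L m R` empties the stack when it arrives and then stays at its bottom: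
`SC_{12}(L m R) = SC_{12}(L) SC_{12}(R) m`. An output ending in its minimum avoids `231` iff it is
decreasing, and `SC_{12}(L) SC_{12}(R) m` is decreasing iff both halves are and every entry of `L`
exceeds every entry of `R`. That is exactly the recursive description of `Av(213)`, so induction on
the length finishes the proof. -/

lemma sameRel_pair_iff {x y p q : ℕ} : SameRel [x, y] [p, q] ↔ (x < y ↔ p < q) := by
  refine ⟨fun h => h.2 0 1 (by omega) (by simp), fun h => ⟨rfl, fun i j hij hj => ?_⟩⟩
  simp only [length_cons, length_nil] at hj
  obtain rfl : j = 1 := by omega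
  obtain rfl : i = 0 := by omega
  exact h

lemma sameRel_triple_iff {x y z p q r : ℕ} :
    SameRel [x, y, z] [p, q, r] ↔ (x < y ↔ p < q) ∧ (x < z ↔ p < r) ∧ (y < z ↔ q < r) := by
  refine ⟨fun h => ⟨h.2 0 1 (by omega) (by simp), h.2 0 2 (by omega) (by simp),
    h.2 1 2 (by omega) (by simp)⟩, fun ⟨h01, h02, h12⟩ => ⟨rfl, fun i j hij hj => ?_⟩⟩
  simp only [length_cons, length_nil] at hj
  interval_cases j <;> interval_cases i <;> assumption

lemma containsC_12_iff {l : List ℕ} : ContainsC l [1, 2] ↔ ∃ x y, x < y ∧ [x, y] <:+: l := by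
  constructor
  · rintro ⟨u, hu, hrel⟩
    obtain ⟨x, y, rfl⟩ := length_eq_two.1 hrel.1
    exact ⟨x, y, by simpa using sameRel_pair_iff.1 hrel, hu⟩
  · rintro ⟨x, y, hxy, hu⟩
    exact ⟨[x, y], hu, sameRel_pair_iff.2 (by simpa using hxy)⟩

lemma containsPat_213_iff {l : List ℕ} (hl : l.Nodup) :
    ContainsPat l [2, 1, 3] ↔ ∃ b a c, a < b ∧ b < c ∧ [b, a, c] <+ l := by
  constructor
  · rintro ⟨u, hu, hrel⟩
    obtain ⟨b, a, c, rfl⟩ := length_eq_three.1 hrel.1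
    have hne : (b ≠ a ∧ b ≠ c) ∧ a ≠ c := by simpa using hl.sublist hu
    have := sameRel_triple_iff.1 hrel
    exact ⟨b, a, c, by omega, by omega, hu⟩
  · rintro ⟨b, a, c, hab, hbc, hu⟩
    exact ⟨[b, a, c], hu, sameRel_triple_iff.2 (by omega)⟩

lemma containsPat_231_iff {l : List ℕ} (hl : l.Nodup) :
    ContainsPat l [2, 3, 1] ↔ ∃ b c a, a < b ∧ b < c ∧ [b, c, a] <+ l := by
  constructor
  · rintro ⟨u, hu, hrel⟩
    obtain ⟨b, c, a, rfl⟩ := length_eq_three.1 hrel.1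
    have hne : (b ≠ c ∧ b ≠ a) ∧ c ≠ a := by simpa using hl.sublist hu
    have := sameRel_triple_iff.1 hrel
    exact ⟨b, c, a, by omega, by omega, hu⟩
  · rintro ⟨b, c, a, hab, hbc, hu⟩
    exact ⟨[b, c, a], hu, sameRel_triple_iff.2 (by omega)⟩

lemma avoidsPat_nil {σ : List ℕ} (hσ : σ ≠ []) : AvoidsPat [] σ := by
  rintro ⟨u, hu, hlen, -⟩
  rw [sublist_nil.1 hu, length_nil, eq_comm, length_eq_zero_iff] at hlen
  exact hσ hlen

lemma sublist_triple_append {α : Type*} {x y z : α} {L R : List α} (h : [x, y, z] <+ L ++ R) :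
    [x, y, z] <+ L ∨ [x, y, z] <+ R ∨ (x ∈ L ∧ z ∈ R) := by
  obtain ⟨l₁, l₂, heq, h₁, h₂⟩ := sublist_append_iff.1 h
  rcases l₁ with _ | ⟨_, _ | ⟨_, _ | ⟨_, _ | ⟨_, _⟩⟩⟩⟩ <;>
    simp only [nil_append, cons_append, cons.injEq, reduceCtorEq, and_false] at heq
  · exact Or.inr (Or.inl (heq ▸ h₂))
  · obtain ⟨rfl, rfl⟩ := heq
    exact Or.inr (Or.inr ⟨h₁.subset mem_cons_self, h₂.subset (by simp)⟩)
  · obtain ⟨rfl, rfl, rfl⟩ := heq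
    exact Or.inr (Or.inr ⟨h₁.subset mem_cons_self, h₂.subset mem_cons_self⟩)
  · obtain ⟨rfl, rfl, rfl, -⟩ := heq
    exact Or.inl h₁

lemma exists_eq_append_min_cons {l : List ℕ} (hl : l.Nodup) (hne : l ≠ []) :
    ∃ L m R, l = L ++ m :: R ∧ ∀ x ∈ L ++ R, m < x := by
  obtain ⟨L, R, hLR⟩ := append_of_mem (min_mem hne)
  refine ⟨L, l.min hne, R, hLR, fun x hx => lt_of_le_of_ne (min_le_of_mem ?_) ?_⟩
  · rw [hLR]; simp only [List.mem_append, List.mem_cons] at hx ⊢; tauto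
  · rintro rfl
    rw [hLR, nodup_middle] at hl
    exact (nodup_cons.1 hl).1 hx

/-- `SCc [1, 2]` with its test made explicit: the stack (head = top) stays weakly decreasing,
so pushing `a` onto `b :: s` creates a consecutive `12` exactly when `a < b`. -/
def sc12Run : List ℕ → List ℕ → List ℕ → List ℕ
  | [], s, out => out ++ s
  | a :: r, [], out => sc12Run r [a] out
  | a :: r, b :: s, out =>
    if a < b then sc12Run (a :: r) s (out ++ [b]) else sc12Run r (a :: b :: s) out
  termination_by i s _ => 2 * i.length + s.length
  decreasing_by all_goals (simp only [length_cons]; omega)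

def sc12 (l : List ℕ) : List ℕ := sc12Run l [] []

lemma not_containsC_12_of_pairwise {l : List ℕ} (h : l.Pairwise (· ≥ ·)) :
    ¬ ContainsC l [1, 2] := by
  rw [containsC_12_iff]
  rintro ⟨x, y, hxy, hu⟩
  exact (pairwise_iff_forall_sublist.1 h hu.sublist).not_gt hxy

lemma stackAux_containsC_12 (i s o : List ℕ) (hs : s.Pairwise (· ≥ ·)) :
    stackAux (ContainsC · [1, 2]) i s o = sc12Run i s o := by
  induction i, s, o using sc12Run.induct with
  | case1 s o => rw [stackAux, sc12Run]
  | case2 a r o ih =>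
    rw [stackAux, sc12Run, if_neg (not_containsC_12_of_pairwise (by simp))]
    exact ih (by simp)
  | case3 a r b s o hab ih =>
    have hbad : ContainsC (a :: b :: s) [1, 2] :=
      containsC_12_iff.2 ⟨a, b, hab, (prefix_append [a, b] s).isInfix⟩
    rw [stackAux, sc12Run, if_pos hbad, if_pos hab]
    exact ih (pairwise_cons.1 hs).2
  | case4 a r b s o hab ih =>
    have hs' : (a :: b :: s).Pairwise (· ≥ ·) := hs.cons_cons_of_trans (not_lt.1 hab)
    rw [stackAux, sc12Run, if_neg (not_containsC_12_of_pairwise hs'), if_neg hab]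
    exact ih hs'

lemma SCc_12_eq_sc12 (l : List ℕ) : SCc [1, 2] l = sc12 l :=
  stackAux_containsC_12 l [] [] Pairwise.nil

lemma sc12Run_perm (i s o : List ℕ) : sc12Run i s o ~ o ++ i ++ s := by
  induction i, s, o using sc12Run.induct with
  | case1 s o => simp [sc12Run]
  | case2 a r o ih => rw [sc12Run]; exact ih.trans (perm_iff_count.2 fun x => by simp [count_cons])
  | case3 a r b s o hab ih =>
    rw [sc12Run, if_pos hab]; exact ih.trans (perm_iff_count.2 fun x => by simp [count_cons]; omega)
  | case4 a r b s o hab ih =>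
    rw [sc12Run, if_neg hab]; exact ih.trans (perm_iff_count.2 fun x => by simp [count_cons]; omega)

lemma sc12_perm (l : List ℕ) : sc12 l ~ l := by simpa [sc12] using sc12Run_perm l [] []

lemma sc12Run_append_output (i s o o' : List ℕ) :
    sc12Run i s (o ++ o') = o ++ sc12Run i s o' := by
  induction i, s, o' using sc12Run.induct with
  | case1 s o' => simp [sc12Run]
  | case2 a r o' ih => rw [sc12Run, sc12Run, ih]
  | case3 a r b s o' hab ih => rw [sc12Run, sc12Run, if_pos hab, if_pos hab, append_assoc, ih]
  | case4 a r b s o' hab ih => rw [sc12Run, sc12Run, if_neg hab, if_neg hab, ih]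

lemma sc12Run_min_cons {m : ℕ} (r : List ℕ) {s : List ℕ} (hm : ∀ x ∈ s, m < x) (o : List ℕ) :
    sc12Run (m :: r) s o = sc12Run r [m] (o ++ s) := by
  induction s generalizing o with
  | nil => simp [sc12Run]
  | cons b s ih =>
    rw [sc12Run, if_pos (hm b mem_cons_self), ih (fun x hx => hm x (mem_cons_of_mem b hx))]
    simp

lemma sc12Run_stack_append_min {m : ℕ} (r s o : List ℕ) (hm : ∀ x ∈ r ++ s, m < x) :
    sc12Run r (s ++ [m]) o = sc12Run r s o ++ [m] := by
  induction r, s, o using sc12Run.induct with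
  | case1 s o => simp [sc12Run]
  | case2 a r o ih =>
    have ham : ¬ a < m := (hm a (by simp)).not_gt
    rw [nil_append, sc12Run, sc12Run, if_neg ham, ← ih (fun x hx => hm x (by grind))]
    rfl
  | case3 a r b s o hab ih =>
    rw [cons_append, sc12Run, sc12Run, if_pos hab, if_pos hab, ih (fun x hx => hm x (by grind))]
  | case4 a r b s o hab ih =>
    rw [cons_append, sc12Run, sc12Run, if_neg hab, if_neg hab, ← ih (fun x hx => hm x (by grind))]
    rfl

lemma sc12Run_append_min_cons {m : ℕ} (L R s o : List ℕ) (hm : ∀ x ∈ L ++ s ++ R, m < x) :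
    sc12Run (L ++ m :: R) s o = sc12Run L s o ++ sc12 R ++ [m] := by
  induction L, s, o using sc12Run.induct with
  | case1 s o =>
    rw [nil_append, sc12Run_min_cons R (fun x hx => hm x (by grind)) o, ← nil_append [m],
      sc12Run_stack_append_min R [] _ (fun x hx => hm x (by grind)),
      ← append_nil (o ++ s), sc12Run_append_output]
    simp [sc12Run, sc12]
  | case2 a r o ih =>
    rw [cons_append, sc12Run, sc12Run, ih (fun x hx => hm x (by grind))]
  | case3 a r b s o hab ih =>
    rw [cons_append, sc12Run, sc12Run, if_pos hab, if_pos hab, ← cons_append,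
      ih (fun x hx => hm x (by grind))]
  | case4 a r b s o hab ih =>
    rw [cons_append, sc12Run, sc12Run, if_neg hab, if_neg hab, ih (fun x hx => hm x (by grind))]

lemma sc12_append_min_cons {L R : List ℕ} {m : ℕ} (hm : ∀ x ∈ L ++ R, m < x) :
    sc12 (L ++ m :: R) = sc12 L ++ sc12 R ++ [m] :=
  sc12Run_append_min_cons L R [] [] (by simpa using hm)

lemma avoidsPat_213_append_min_cons_iff {L R : List ℕ} {m : ℕ} (hl : (L ++ m :: R).Nodup)
    (hm : ∀ x ∈ L ++ R, m < x) :
    AvoidsPat (L ++ m :: R) [2, 1, 3] ↔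
      AvoidsPat L [2, 1, 3] ∧ AvoidsPat R [2, 1, 3] ∧ ∀ x ∈ L, ∀ y ∈ R, y < x := by
  have hR : R <+ L ++ m :: R := (sublist_cons_self m R).trans (sublist_append_right L _)
  have hLR : ∀ x ∈ L, ∀ y ∈ m :: R, x ≠ y := (nodup_append.1 hl).2.2
  simp only [AvoidsPat, containsPat_213_iff hl, containsPat_213_iff (hl.sublist hR),
    containsPat_213_iff (hl.sublist (sublist_append_left L _))]
  constructor
  · intro h
    refine ⟨fun ⟨b, a, c, hab, hbc, hs⟩ => h ⟨b, a, c, hab, hbc, hs.trans (sublist_append_left ..)⟩,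
      fun ⟨b, a, c, hab, hbc, hs⟩ => h ⟨b, a, c, hab, hbc, hs.trans hR⟩, fun x hx y hy => ?_⟩
    by_contra hxy
    have hxy : x < y := lt_of_le_of_ne (not_lt.1 hxy) (hLR x hx y (mem_cons_of_mem m hy))
    exact h ⟨x, m, y, hm x (mem_append_left R hx), hxy,
      (singleton_sublist.2 hx).append (cons_sublist_cons.2 (singleton_sublist.2 hy))⟩
  · rintro ⟨hL, hR, hLR⟩ ⟨b, a, c, hab, hbc, hs⟩
    rcases sublist_triple_append hs with hs | hs | ⟨hb, hc⟩
    · exact hL ⟨b, a, c, hab, hbc, hs⟩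
    · rcases sublist_cons_iff.1 hs with hs | ⟨r, heq, hs⟩
      · exact hR ⟨b, a, c, hab, hbc, hs⟩
      · obtain ⟨rfl, rfl⟩ := cons.inj heq
        have := hm a (mem_append_right L (hs.subset mem_cons_self))
        omega
    · rcases List.mem_cons.1 hc with rfl | hc
      · have := hm b (mem_append_left R hb)
        omega
      · have := hLR b hb c hc
        omega

lemma pairwise_gt_sc12_iff_avoidsPat_213 {l : List ℕ} (hl : l.Nodup) :
    (sc12 l).Pairwise (· > ·) ↔ AvoidsPat l [2, 1, 3] := by
  induction hn : l.length using Nat.strong_induction_on generalizing l with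
  | _ n ih =>
  rcases eq_or_ne l [] with rfl | hne
  · simpa [sc12, sc12Run] using avoidsPat_nil (by simp)
  obtain ⟨L, m, R, rfl, hm⟩ := exists_eq_append_min_cons hl hne
  have hLR : (L ++ R).Nodup := (nodup_middle.1 hl).of_cons
  rw [sc12_append_min_cons hm, avoidsPat_213_append_min_cons_iff hl hm,
    ← ih L.length (by simp [← hn]) (hLR.sublist (sublist_append_left L R)) rfl,
    ← ih R.length (by simp [← hn]; omega) (hLR.sublist (sublist_append_right L R)) rfl]
  have hmin : ∀ x ∈ sc12 L ++ sc12 R, ∀ y ∈ [m], x > y := fun x hx y hy =>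
    (List.mem_singleton.1 hy) ▸ hm x (((sc12_perm L).append (sc12_perm R)).subset hx)
  rw [pairwise_append, and_iff_left ⟨pairwise_singleton _ _, hmin⟩, pairwise_append]
  simp only [(sc12_perm L).mem_iff, (sc12_perm R).mem_iff, gt_iff_lt]

lemma avoidsPat_231_append_min_iff {l : List ℕ} {m : ℕ} (hl : l.Nodup) (hm : ∀ x ∈ l, m < x) :
    AvoidsPat (l ++ [m]) [2, 3, 1] ↔ l.Pairwise (· > ·) := by
  have hlm : (l ++ [m]).Nodup :=
    nodup_append.2 ⟨hl, nodup_singleton m,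
      fun x hx y hy => (List.mem_singleton.1 hy) ▸ (hm x hx).ne'⟩
  rw [AvoidsPat, containsPat_231_iff hlm]
  constructor
  · refine fun h => pairwise_iff_forall_sublist.2 fun {x y} hxy => ?_
    by_contra hle
    have hne : x ≠ y := by simpa using hl.sublist hxy
    exact h ⟨x, y, m, hm x (hxy.subset mem_cons_self), by omega,
      hxy.append (Sublist.refl [m])⟩
  · rintro hp ⟨b, c, a, hab, hbc, hs⟩
    have hp' : (l ++ [m]).Pairwise (· > ·) :=
      pairwise_append.2 ⟨hp, pairwise_singleton _ _,
        fun x hx y hy => (List.mem_singleton.1 hy) ▸ hm x hx⟩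
    have := pairwise_iff_forall_sublist.1 hp' ((sublist_append_left [b, c] [a]).trans hs)
    omega

lemma avoidsPat_231_sc12_iff {l : List ℕ} (hl : l.Nodup) :
    AvoidsPat (sc12 l) [2, 3, 1] ↔ (sc12 l).Pairwise (· > ·) := by
  rcases eq_or_ne l [] with rfl | hne
  · simpa [sc12, sc12Run] using avoidsPat_nil (by simp)
  obtain ⟨L, m, R, rfl, hm⟩ := exists_eq_append_min_cons hl hne
  have hperm : sc12 L ++ sc12 R ~ L ++ R := (sc12_perm L).append (sc12_perm R)
  have hmin : ∀ x ∈ sc12 L ++ sc12 R, m < x := fun x hx => hm x (hperm.subset hx)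
  rw [sc12_append_min_cons hm,
    avoidsPat_231_append_min_iff (hperm.nodup_iff.2 (nodup_middle.1 hl).of_cons) hmin,
    pairwise_append (l₂ := [m])]
  exact (and_iff_left ⟨pairwise_singleton _ _,
    fun x hx y hy => (List.mem_singleton.1 hy) ▸ hmin x hx⟩).symm

/-- Sort(SC_{12}) = Av(213). -/
theorem sort_sc12_eq_av213 (n : ℕ) (π : List ℕ) (hπ : IsPermList n π) :
    AvoidsPat (SCc [1, 2] π) [2, 3, 1] ↔ AvoidsPat π [2, 1, 3] := by
  have hnd : π.Nodup := hπ.nodup_iff.2 (nodup_range.map fun _ _ => Nat.succ.inj)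
  rw [SCc_12_eq_sc12, avoidsPat_231_sc12_iff hnd, pairwise_gt_sc12_iff_avoidsPat_213 hnd]
end

section
/- Let g(π) denote the total number of indices that are peaks or valleys of π. For every permutation π, g(π) ≤ g(SC_{321}(π)). -/
open List Finset

attribute [local instance] Classical.propDecidable

/-- The number of indices of `π` that are peaks or valleys. -/
noncomputable def pvCount (π : List ℕ) : ℕ :=
  ((Finset.Ico 1 (π.length - 1)).filter (fun i =>
    (π.getD (i - 1) 0 < π.getD i 0 ∧ π.getD (i + 1) 0 < π.getD i 0) ∨
    (π.getD i 0 < π.getD (i - 1) 0 ∧ π.getD i 0 < π.getD (i + 1) 0))).card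

/-!
Cut `π` into its maximal ascending runs `a₁, …, a_k`. Deleting an interior entry `m` of a run,
with neighbours `a < m < b`, creates or destroys no peak or valley, so `π` has as many peaks and
valleys as `a₁ᵉ ⋯ a_kᵉ`, hence as its reversal `rev(a_kᵉ) ⋯ rev(a₁ᵉ)`, which is a suffix of
`SC₃₂₁(π)`; prepending entries to a word never destroys a peak or valley.
-/

def IsPeakOrValley (x y z : ℕ) : Prop := (x < y ∧ z < y) ∨ (y < x ∧ y < z)

theorem isPeakOrValley_comm {x y z : ℕ} : IsPeakOrValley z y x ↔ IsPeakOrValley x y z := by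
  unfold IsPeakOrValley; omega

theorem pvCount_eq_sum (l : List ℕ) :
    pvCount l = ∑ k ∈ range (l.length - 2),
      if IsPeakOrValley (l.getD k 0) (l.getD (k + 1) 0) (l.getD (k + 2) 0) then 1 else 0 := by
  rw [pvCount, card_filter, sum_Ico_eq_sum_range]
  refine sum_congr (by rw [Nat.sub_sub]) fun k _ => ?_
  simp only [IsPeakOrValley, add_comm 1 k, add_assoc, one_add_one_eq_two, Nat.add_sub_cancel]
  congr 1

theorem pvCount_eq_zero_of_length_le_two {l : List ℕ} (hl : l.length ≤ 2) : pvCount l = 0 := by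
  rw [pvCount_eq_sum, Nat.sub_eq_zero_of_le hl, sum_range_zero]

theorem pvCount_cons_cons_cons (a b c : ℕ) (t : List ℕ) :
    pvCount (a :: b :: c :: t) = (if IsPeakOrValley a b c then 1 else 0) + pvCount (b :: c :: t) := by
  rw [pvCount_eq_sum, pvCount_eq_sum]
  simp only [List.length_cons, show t.length + 1 + 1 + 1 - 2 = t.length + 1 by omega,
    Finset.sum_range_succ' _ t.length]
  simp only [List.getD_cons_succ, List.getD_cons_zero, show t.length + 1 + 1 - 2 = t.length by omega]
  rw [add_comm]

theorem pvCount_reverse (l : List ℕ) : pvCount l.reverse = pvCount l := by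
  rw [pvCount_eq_sum, pvCount_eq_sum, List.length_reverse, ← sum_range_reflect]
  refine sum_congr rfl fun k hk => ?_
  rw [Finset.mem_range] at hk
  rw [List.getD_reverse _ (by omega), List.getD_reverse _ (by omega), List.getD_reverse _ (by omega),
    ← isPeakOrValley_comm]
  congr 4 <;> omega

theorem pvCount_le_pvCount_cons (a : ℕ) (l : List ℕ) : pvCount l ≤ pvCount (a :: l) := by
  match l with
  | b :: c :: t => rw [pvCount_cons_cons_cons]; omega
  | [] | [_] => rw [pvCount_eq_zero_of_length_le_two (by simp)]; exact Nat.zero_le _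

theorem pvCount_le_pvCount_append (l₁ l₂ : List ℕ) : pvCount l₂ ≤ pvCount (l₁ ++ l₂) := by
  induction l₁ with
  | nil => rfl
  | cons a l₁ ih => exact ih.trans (pvCount_le_pvCount_cons a _)

theorem pvCount_append_erase_mid : ∀ (p : List ℕ) {a m b : ℕ} (s : List ℕ), a < m → m < b →
    pvCount (p ++ a :: m :: b :: s) = pvCount (p ++ a :: b :: s)
  | [], a, m, b, s, ham, hmb => by
    have hm : ¬ IsPeakOrValley a m b := by unfold IsPeakOrValley; omega
    rw [List.nil_append, List.nil_append, pvCount_cons_cons_cons, if_neg hm, zero_add]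
    cases s with
    | nil => simp only [pvCount_eq_zero_of_length_le_two, List.length_cons, List.length_nil, le_refl]
    | cons c s =>
      have hb : IsPeakOrValley m b c ↔ IsPeakOrValley a b c := by unfold IsPeakOrValley; omega
      rw [pvCount_cons_cons_cons, pvCount_cons_cons_cons, if_congr hb rfl rfl]
  | [x], a, m, b, s, ham, hmb => by
    have ha : IsPeakOrValley x a m ↔ IsPeakOrValley x a b := by unfold IsPeakOrValley; omega
    rw [List.singleton_append, List.singleton_append, pvCount_cons_cons_cons x a m,
      pvCount_cons_cons_cons x a b, if_congr ha rfl rfl]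
    exact congrArg _ (pvCount_append_erase_mid [] s ham hmb)
  | x :: y :: p, a, m, b, s, ham, hmb => by
    have ih := pvCount_append_erase_mid (y :: p) s ham hmb
    cases p <;> simp only [List.cons_append, List.nil_append, pvCount_cons_cons_cons] at ih ⊢ <;> omega

/-- The paper's `a^e`; `runInterior` below is `a^m`. -/
def runEnds : List ℕ → List ℕ
  | a :: b :: t => [a, (b :: t).getLast (List.cons_ne_nil b t)]
  | l => l

def runInterior (r : List ℕ) : List ℕ := r.tail.dropLast

theorem pvCount_append_runEnds_append :
    ∀ (p r s : List ℕ), r.IsChain (· < ·) → pvCount (p ++ r ++ s) = pvCount (p ++ runEnds r ++ s)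
  | p, a :: m :: b :: t, s, hr => by
    obtain ⟨ham, hmb, hbt⟩ : a < m ∧ m < b ∧ (b :: t).IsChain (· < ·) := by
      simpa only [List.isChain_cons_cons] using hr
    have ih := pvCount_append_runEnds_append p (a :: b :: t) s
      (List.isChain_cons_cons.2 ⟨ham.trans hmb, hbt⟩)
    simp only [List.append_assoc, List.cons_append] at ih ⊢
    rw [pvCount_append_erase_mid p _ ham hmb, ih]
    simp [runEnds]
  | _, [], _, _ | _, [_], _, _ | _, [_, _], _, _ => rfl
termination_by _ r => r.length

theorem pvCount_flatten (R : List (List ℕ)) (hR : ∀ r ∈ R, r.IsChain (· < ·)) :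
    pvCount R.flatten = pvCount (R.flatMap runEnds) := by
  suffices ∀ p, pvCount (p ++ R.flatten) = pvCount (p ++ R.flatMap runEnds) from this []
  induction R with
  | nil => simp
  | cons r R ih =>
    intro p
    rw [List.flatten_cons, List.flatMap_cons, ← List.append_assoc,
      pvCount_append_runEnds_append p r _ (hR r (by simp)), List.append_assoc,
      ← List.append_assoc p, ih (fun r' hr' => hR r' (by simp [hr'])), List.append_assoc]

theorem sameRel_321_iff {u : List ℕ} :
    SameRel u [3, 2, 1] ↔ ∃ a b c, u = [a, b, c] ∧ b ≤ a ∧ c ≤ b := by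
  constructor
  · rintro ⟨hlen, h⟩
    match u, hlen with
    | [a, b, c], _ =>
      have hab := h 0 1 (by omega) (by simp)
      have hbc := h 1 2 (by omega) (by simp)
      simp only [List.getD_cons_zero, List.getD_cons_succ] at hab hbc
      exact ⟨a, b, c, rfl, by omega, by omega⟩
  · rintro ⟨a, b, c, rfl, hba, hcb⟩
    refine ⟨rfl, fun i j hij hj => ?_⟩
    simp only [List.length_cons, List.length_nil] at hj
    interval_cases j <;> interval_cases i <;> simp <;> omega

def Contains321 (l : List ℕ) : Prop := ContainsC l [3, 2, 1]

theorem not_contains321_nil : ¬ Contains321 [] := by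
  rintro ⟨u, hu, hrel⟩
  obtain ⟨a, b, c, rfl, -⟩ := sameRel_321_iff.1 hrel
  simpa using hu.length_le

theorem contains321_cons_iff {x : ℕ} {l : List ℕ} :
    Contains321 (x :: l) ↔ (∃ b c t, l = b :: c :: t ∧ b ≤ x ∧ c ≤ b) ∨ Contains321 l := by
  simp only [Contains321, ContainsC, List.infix_cons_iff, or_and_right, exists_or, sameRel_321_iff]
  refine or_congr_left ⟨?_, ?_⟩
  · rintro ⟨u, ⟨t, ht⟩, a, b, c, rfl, hba, hcb⟩
    simp only [List.cons_append, List.nil_append, List.cons.injEq] at ht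
    obtain ⟨rfl, rfl⟩ := ht
    exact ⟨b, c, t, rfl, hba, hcb⟩
  · rintro ⟨b, c, t, rfl, hbx, hcb⟩
    exact ⟨[x, b, c], ⟨t, rfl⟩, x, b, c, rfl, hbx, hcb⟩

theorem not_contains321_cons {x : ℕ} {S : List ℕ} (hS : ¬ Contains321 S)
    (hx : ∀ s ∈ S.head?, x < s) : ¬ Contains321 (x :: S) := by
  rw [contains321_cons_iff]
  rintro (⟨b, c, t, rfl, hbx, -⟩ | h)
  · simp only [List.head?_cons, Option.mem_def, Option.some.injEq, forall_eq'] at hx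
    omega
  · exact hS h

theorem not_contains321_cons_cons {x y : ℕ} {S : List ℕ} (hS : ¬ Contains321 S)
    (hx : ∀ s ∈ S.head?, x < s) : ¬ Contains321 (y :: x :: S) := by
  rw [contains321_cons_iff]
  rintro (⟨b, c, t, h, -, hcb⟩ | h)
  · obtain ⟨rfl, rfl⟩ := List.cons.inj h
    simp only [List.head?_cons, Option.mem_def, Option.some.injEq, forall_eq'] at hx
    omega
  · exact not_contains321_cons hS hx h

theorem stackAux_nil (bad : List ℕ → Prop) (S out : List ℕ) : stackAux bad [] S out = out ++ S := by
  rw [stackAux.eq_def]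

theorem stackAux_push {bad : List ℕ → Prop} {a : ℕ} {r S : List ℕ} (out : List ℕ)
    (h : ¬ bad (a :: S)) : stackAux bad (a :: r) S out = stackAux bad r (a :: S) out := by
  rw [stackAux.eq_def]; simp only [if_neg h]

theorem stackAux_pop {bad : List ℕ → Prop} {a b : ℕ} {r S : List ℕ} (out : List ℕ)
    (h : bad (a :: b :: S)) :
    stackAux bad (a :: r) (b :: S) out = stackAux bad (a :: r) S (out ++ [b]) := by
  rw [stackAux.eq_def]; simp only [if_pos h]

/-- While a run is read, its first entry stays on the stack: each new entry forms a consecutive 321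
with the two entries below it, which pops the previous top to the output. -/
theorem stackAux_contains321_run : ∀ (y : ℕ) (zs rest S out : List ℕ),
    (y :: zs).IsChain (· < ·) → ¬ Contains321 S → (∀ s ∈ S.head?, y < s) →
    stackAux Contains321 (zs ++ rest) (y :: S) out =
      stackAux Contains321 rest ((runEnds (y :: zs)).reverse ++ S)
        (out ++ runInterior (y :: zs))
  | y, [], rest, S, out, _, _, _ => by simp [runEnds, runInterior]
  | y, [z], rest, S, out, _, hS, hy => by
    rw [List.singleton_append, stackAux_push out (not_contains321_cons_cons hS hy)]
    simp [runEnds, runInterior]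
  | y, z :: z' :: zs, rest, S, out, hr, hS, hy => by
    obtain ⟨hyz, hzz', hz'zs⟩ : y < z ∧ z < z' ∧ (z' :: zs).IsChain (· < ·) := by
      simpa only [List.isChain_cons_cons] using hr
    rw [List.cons_append, stackAux_push out (not_contains321_cons_cons hS hy), List.cons_append,
      stackAux_pop out (contains321_cons_iff.2 (Or.inl ⟨z, y, S, rfl, hzz'.le, hyz.le⟩)),
      ← List.cons_append, stackAux_contains321_run y (z' :: zs) rest S (out ++ [z])
        (List.isChain_cons_cons.2 ⟨hyz.trans hzz', hz'zs⟩) hS hy]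
    simp [runEnds, runInterior]

theorem not_contains321_reverse_runEnds_append {y : ℕ} {zs S : List ℕ} (hS : ¬ Contains321 S)
    (hy : ∀ s ∈ S.head?, y < s) : ¬ Contains321 ((runEnds (y :: zs)).reverse ++ S) := by
  cases zs with
  | nil => exact not_contains321_cons hS hy
  | cons z t => exact not_contains321_cons_cons hS hy

theorem head?_reverse_runEnds_append (y : ℕ) (zs S : List ℕ) :
    ((runEnds (y :: zs)).reverse ++ S).head? = (y :: zs).getLast? := by
  cases zs <;> simp [runEnds, List.getLast?_eq_some_getLast]

/-- A decomposition into ascending runs, maximal because consecutive runs meet in a descent. -/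
def IsAscRuns (R : List (List ℕ)) : Prop :=
  (∀ r ∈ R, r ≠ [] ∧ r.IsChain (· < ·)) ∧
    R.IsChain (fun r s => ∀ a ∈ r.getLast?, ∀ b ∈ s.head?, b < a)

theorem stackAux_contains321_flatten : ∀ (R : List (List ℕ)) (S out : List ℕ), IsAscRuns R →
    ¬ Contains321 S → (∀ r ∈ R.head?, ∀ s ∈ S.head?, ∀ x ∈ r.head?, x < s) →
    stackAux Contains321 R.flatten S out =
      out ++ R.flatMap runInterior ++ ((R.flatMap runEnds).reverse ++ S)
  | [], S, out, _, _, _ => by simp [stackAux_nil]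
  | [] :: R, _, _, hR, _, _ => absurd rfl (hR.1 [] (by simp)).1
  | (y :: zs) :: R, S, out, ⟨hruns, hdesc⟩, hS, hhead => by
    rw [List.forall_mem_cons] at hruns
    rw [List.isChain_cons] at hdesc
    have hy : ∀ s ∈ S.head?, y < s := by simpa using hhead
    rw [List.flatten_cons, List.cons_append, stackAux_push out (not_contains321_cons hS hy),
      stackAux_contains321_run y zs _ S out hruns.1.2 hS hy,
      stackAux_contains321_flatten R _ _ ⟨hruns.2, hdesc.2⟩
        (not_contains321_reverse_runEnds_append hS hy)
        (by rw [head?_reverse_runEnds_append]; exact hdesc.1)]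
    simp

theorem exists_isAscRuns_cons (a : ℕ) (l : List ℕ) (hl : (a :: l).IsChain (· ≠ ·)) :
    ∃ r R, ((a :: r) :: R).flatten = a :: l ∧ IsAscRuns ((a :: r) :: R) := by
  induction l generalizing a with
  | nil => exact ⟨[], [], rfl, by simp [IsAscRuns]⟩
  | cons b l ih =>
    obtain ⟨hab, hbl⟩ := List.isChain_cons_cons.1 hl
    obtain ⟨r, R, hflat, hruns, hdesc⟩ := ih b hbl
    rw [List.forall_mem_cons] at hruns
    rw [List.isChain_cons] at hdesc
    rcases lt_or_gt_of_ne hab with hlt | hgt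
    · refine ⟨b :: r, R, by simp_all, ?_, ?_⟩
      · simp only [List.forall_mem_cons]
        exact ⟨⟨List.cons_ne_nil _ _, List.isChain_cons_cons.2 ⟨hlt, hruns.1.2⟩⟩, hruns.2⟩
      · simp only [List.isChain_cons]
        exact ⟨by simpa using hdesc.1, hdesc.2⟩
    · refine ⟨[], (b :: r) :: R, by simp_all, ?_, ?_⟩
      · simp only [List.forall_mem_cons]
        exact ⟨⟨List.cons_ne_nil _ _, List.isChain_singleton _⟩, hruns.1, hruns.2⟩
      · simp only [List.isChain_cons]
        exact ⟨by simpa using hgt, hdesc.1, hdesc.2⟩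

theorem exists_isAscRuns (l : List ℕ) (hl : l.IsChain (· ≠ ·)) :
    ∃ R, R.flatten = l ∧ IsAscRuns R := by
  cases l with
  | nil => exact ⟨[], rfl, by simp [IsAscRuns]⟩
  | cons a l =>
    obtain ⟨r, R, h⟩ := exists_isAscRuns_cons a l hl
    exact ⟨_, h⟩

theorem SCc_321_flatten {R : List (List ℕ)} (hR : IsAscRuns R) :
    SCc [3, 2, 1] R.flatten = R.flatMap runInterior ++ (R.flatMap runEnds).reverse := by
  show stackAux Contains321 R.flatten [] [] = _
  simpa using stackAux_contains321_flatten R [] [] hR not_contains321_nil (by simp)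

/-- g(π) ≤ g(SC_{321}(π)) for every permutation π. -/
theorem pv_le_pv_sc321 (n : ℕ) (π : List ℕ) (hπ : IsPermList n π) :
    pvCount π ≤ pvCount (SCc [3, 2, 1] π) := by
  have hchain : π.IsChain (· ≠ ·) :=
    (hπ.nodup_iff.2 (List.nodup_range.map (add_left_injective 1))).isChain
  obtain ⟨R, rfl, hR⟩ := exists_isAscRuns π hchain
  rw [SCc_321_flatten hR, pvCount_flatten R (fun r hr => (hR.1 r hr).2),
    ← pvCount_reverse (R.flatMap runEnds)]
  exact pvCount_le_pvCount_append _ _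
end

section
/- For every n ≥ 2, the maximum over π ∈ S_n of |SC_{231}^{-1}(π)| equals 2^{n−2}; in particular the decreasing permutation n(n−1)···1 achieves at least 2^{n−2} preimages under SC_{231}. -/
open List Finset

attribute [local instance] Classical.propDecidable

/-! The entry on top of the stack is always the most recent arrival: when `b` arrives on a
stack `a, c, …` (top first), the stack `b, a, c, …` starts with a consecutive 231 exactly when
`c ≤ b < a`; then `a` is popped, after which `b` is pushed onto `c, …` because `c ≤ b`.
So a run is a sequence of steps, each of which pops the previous arrival or not. Marking the
premature entries of `τ` gives a mask whose first and last bits are `false`, and `τ` is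
recovered from `SC_{231}(τ)` and its mask by interleaving the premature prefix of `SC_{231}(τ)`
with the reverse of the rest. Hence a permutation has at most `2^{n-2}` preimages.
Conversely, `1` followed by any word that repeatedly takes either the smallest or the largest
remaining value of `{2, …, n}` is sent to `n ⋯ 1`, which gives `2^{n-2}` preimages. -/

namespace SC231

/-- The arrival of `b` pops the top `a` of the stack `a :: s`. -/
def Pops (b a : ℕ) : List ℕ → Prop
  | [] => False
  | c :: _ => c ≤ b ∧ b < a

theorem not_pops_of_le {a b : ℕ} (s : List ℕ) (h : a ≤ b) : ¬Pops b a s := by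
  cases s with
  | nil => exact id
  | cons c t => exact fun hp => lt_irrefl a (h.trans_lt hp.2)

theorem sameRel_231_iff {u : List ℕ} :
    SameRel u [2, 3, 1] ↔ ∃ x y z, u = [x, y, z] ∧ x < y ∧ z ≤ x := by
  constructor
  · rintro ⟨hlen, h⟩
    obtain ⟨x, y, z, rfl⟩ := List.length_eq_three.mp hlen
    have h01 := h 0 1 (by omega) (by simp)
    have h02 := h 0 2 (by omega) (by simp)
    simp only [List.getD_cons_zero, List.getD_cons_succ] at h01 h02
    exact ⟨x, y, z, rfl, by simpa using h01, by simpa using h02⟩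
  · rintro ⟨x, y, z, rfl, hxy, hzx⟩
    refine ⟨rfl, fun i j hij hj => ?_⟩
    simp only [List.length_cons, List.length_nil] at hj
    interval_cases j <;> interval_cases i <;> simp <;> omega

theorem not_containsC_231_singleton (a : ℕ) : ¬ContainsC [a] [2, 3, 1] := by
  rintro ⟨u, hinf, hrel⟩
  obtain ⟨x, y, z, rfl, -⟩ := sameRel_231_iff.mp hrel
  simpa using hinf.length_le

theorem containsC_231_cons_cons_iff {a b : ℕ} {s : List ℕ} :
    ContainsC (b :: a :: s) [2, 3, 1] ↔ Pops b a s ∨ ContainsC (a :: s) [2, 3, 1] := by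
  constructor
  · rintro ⟨u, hinf, hrel⟩
    obtain ⟨x, y, z, rfl, hxy, hzx⟩ := sameRel_231_iff.mp hrel
    rcases List.infix_cons_iff.mp hinf with ⟨t, ht⟩ | hinf'
    · simp only [List.cons_append, List.nil_append, List.cons.injEq] at ht
      obtain ⟨rfl, rfl, rfl⟩ := ht
      exact Or.inl ⟨hzx, hxy⟩
    · exact Or.inr ⟨_, hinf', hrel⟩
  · rintro (hpops | ⟨u, hinf, hrel⟩)
    · obtain ⟨c, t⟩ | ⟨c, t⟩ := s
      · exact hpops.elim
      obtain ⟨hcb, hba⟩ := hpops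
      exact ⟨[b, a, c], ⟨[], t, rfl⟩, sameRel_231_iff.mpr ⟨b, a, c, rfl, hba, hcb⟩⟩
    · exact ⟨u, hinf.trans (List.infix_cons (List.infix_refl _)), hrel⟩

theorem not_containsC_231_of_pops {a b : ℕ} {s : List ℕ} (hs : ¬ContainsC (a :: s) [2, 3, 1])
    (hpops : Pops b a s) : ¬ContainsC (b :: s) [2, 3, 1] := by
  obtain _ | ⟨c, t⟩ := s
  · exact hpops.elim
  rw [containsC_231_cons_cons_iff]
  rintro (hbc | hct)
  · exact not_pops_of_le t hpops.1 hbc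
  · exact hs (containsC_231_cons_cons_iff.mpr (Or.inr hct))

-- The arguments are the remaining input, the top of the stack and the rest of the stack.

noncomputable def runOutput : List ℕ → ℕ → List ℕ → List ℕ
  | [], a, s => a :: s
  | b :: r, a, s => if Pops b a s then a :: runOutput r b s else runOutput r b (a :: s)

noncomputable def runPops : List ℕ → ℕ → List ℕ → List ℕ
  | [], _, _ => []
  | b :: r, a, s => if Pops b a s then a :: runPops r b s else runPops r b (a :: s)

noncomputable def runMask : List ℕ → ℕ → List ℕ → List Bool
  | [], _, _ => [false]
  | b :: r, a, s => if Pops b a s then true :: runMask r b s else false :: runMask r b (a :: s)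

theorem runOutput_cons_of_pops {a b : ℕ} {r s : List ℕ} (h : Pops b a s) :
    runOutput (b :: r) a s = a :: runOutput r b s := if_pos h

theorem runOutput_cons_of_not_pops {a b : ℕ} {r s : List ℕ} (h : ¬Pops b a s) :
    runOutput (b :: r) a s = runOutput r b (a :: s) := if_neg h

theorem stackAux_231_eq_runOutput (r : List ℕ) {a : ℕ} {s : List ℕ} (out : List ℕ)
    (hs : ¬ContainsC (a :: s) [2, 3, 1]) :
    stackAux (fun l => ContainsC l [2, 3, 1]) r (a :: s) out = out ++ runOutput r a s := by
  induction r generalizing a s out with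
  | nil => rw [stackAux]; rfl
  | cons b r ih =>
    by_cases hpops : Pops b a s
    · obtain _ | ⟨c, t⟩ := s
      · exact hpops.elim
      have hpush := not_containsC_231_of_pops hs hpops
      rw [stackAux, if_pos (containsC_231_cons_cons_iff.mpr (Or.inl hpops)), stackAux,
        if_neg hpush, ih _ hpush, runOutput_cons_of_pops hpops]
      simp
    · have hpush : ¬ContainsC (b :: a :: s) [2, 3, 1] := by
        rw [containsC_231_cons_cons_iff]
        exact fun h => h.elim hpops hs
      rw [stackAux, if_neg hpush, ih _ hpush, runOutput_cons_of_not_pops hpops]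

theorem SCc_231_cons (a : ℕ) (r : List ℕ) : SCc [2, 3, 1] (a :: r) = runOutput r a [] := by
  rw [SCc, SCgen, stackAux, if_neg (not_containsC_231_singleton a),
    stackAux_231_eq_runOutput r [] (not_containsC_231_singleton a), List.nil_append]

def interleave {α : Type*} : List Bool → List α → List α → List α
  | true :: m, x :: p, q => x :: interleave m p q
  | false :: m, p, y :: q => y :: interleave m p q
  | _, _, _ => []

theorem length_runPops (r : List ℕ) (a : ℕ) (s : List ℕ) :
    (runPops r a s).length = (runMask r a s).count true := by
  induction r generalizing a s with
  | nil => rfl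
  | cons b r ih =>
    by_cases h : Pops b a s <;> simp [runPops, runMask, h, ih]

theorem exists_runOutput_eq (r : List ℕ) (a : ℕ) (s : List ℕ) :
    ∃ g, runOutput r a s = runPops r a s ++ (g ++ s) ∧
      a :: r = interleave (runMask r a s) (runPops r a s) g.reverse := by
  induction r generalizing a s with
  | nil => exact ⟨[a], rfl, rfl⟩
  | cons b r ih =>
    by_cases h : Pops b a s
    · obtain ⟨g, hout, hin⟩ := ih b s
      refine ⟨g, by simp [runOutput, runPops, h, hout], ?_⟩
      simp only [runMask, runPops, if_pos h, interleave, ← hin]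
    · obtain ⟨g, hout, hin⟩ := ih b (a :: s)
      refine ⟨g ++ [a], by simp [runOutput, runPops, h, hout], ?_⟩
      simp only [runMask, runPops, if_neg h, List.reverse_append, List.reverse_singleton,
        List.singleton_append, interleave, ← hin]

noncomputable def prematureMask : List ℕ → List Bool
  | [] => []
  | a :: r => runMask r a []

def decode (m : List Bool) (π : List ℕ) : List ℕ :=
  interleave m (π.take (m.count true)) (π.drop (m.count true)).reverse

theorem decode_prematureMask_SCc_231 (τ : List ℕ) :
    decode (prematureMask τ) (SCc [2, 3, 1] τ) = τ := by
  obtain _ | ⟨a, r⟩ := τ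
  · rfl
  obtain ⟨g, hout, hin⟩ := exists_runOutput_eq r a []
  rw [prematureMask, decode, SCc_231_cons, ← length_runPops, hout, List.append_nil,
    List.take_left, List.drop_left, hin]

theorem eq_of_SCc_231_eq_of_prematureMask_eq {τ₁ τ₂ : List ℕ}
    (hSC : SCc [2, 3, 1] τ₁ = SCc [2, 3, 1] τ₂) (hmask : prematureMask τ₁ = prematureMask τ₂) :
    τ₁ = τ₂ := by
  rw [← decode_prematureMask_SCc_231 τ₁, ← decode_prematureMask_SCc_231 τ₂, hSC, hmask]

theorem exists_runMask_eq_concat_false (r : List ℕ) (a : ℕ) (s : List ℕ) :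
    ∃ v, v.length = r.length ∧ runMask r a s = v ++ [false] := by
  induction r generalizing a s with
  | nil => exact ⟨[], rfl, rfl⟩
  | cons b r ih =>
    by_cases h : Pops b a s
    · obtain ⟨v, hv, hmask⟩ := ih b s
      exact ⟨true :: v, by simp [hv], by simp [runMask, h, hmask]⟩
    · obtain ⟨v, hv, hmask⟩ := ih b (a :: s)
      exact ⟨false :: v, by simp [hv], by simp [runMask, h, hmask]⟩

theorem exists_prematureMask_eq {τ : List ℕ} (hτ : 2 ≤ τ.length) :
    ∃ v, v.length = τ.length - 2 ∧ prematureMask τ = false :: (v ++ [false]) := by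
  obtain _ | ⟨a, _ | ⟨b, r⟩⟩ := τ
  · simp at hτ
  · simp at hτ
  obtain ⟨v, hv, hmask⟩ := exists_runMask_eq_concat_false r b [a]
  refine ⟨v, by simp [hv], ?_⟩
  rw [prematureMask, runMask, if_neg (show ¬Pops b a [] from id), hmask]

theorem mem_permsFinset {n : ℕ} {τ : List ℕ} : τ ∈ permsFinset n ↔ IsPermList n τ := by
  rw [permsFinset, List.mem_toFinset, List.mem_permutations, IsPermList]

theorem length_of_mem_permsFinset {n : ℕ} {τ : List ℕ} (h : τ ∈ permsFinset n) :
    τ.length = n := by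
  simpa using (mem_permsFinset.mp h).length_eq

theorem preCount_SCc_231_le {n : ℕ} (hn : 2 ≤ n) (π : List ℕ) :
    preCount (SCc [2, 3, 1]) n π ≤ 2 ^ (n - 2) := by
  calc preCount (SCc [2, 3, 1]) n π
      ≤ #((univ : Finset (List.Vector Bool (n - 2))).image
          fun v => false :: (v.toList ++ [false])) := by
        refine card_le_card_of_injOn prematureMask (fun τ hτ => ?_) fun τ₁ h₁ τ₂ h₂ hmask => ?_
        · rw [coe_filter] at hτ
          have hlen := length_of_mem_permsFinset hτ.1
          obtain ⟨v, hv, hmask⟩ := exists_prematureMask_eq (τ := τ) (by omega)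
          exact mem_image.mpr ⟨⟨v, by omega⟩, mem_univ _, hmask.symm⟩
        · rw [coe_filter] at h₁ h₂
          exact eq_of_SCc_231_eq_of_prematureMask_eq (h₁.2.trans h₂.2.symm) hmask
    _ ≤ #(univ : Finset (List.Vector Bool (n - 2))) := card_image_le
    _ = 2 ^ (n - 2) := by simp

def decList : ℕ → List ℕ
  | 0 => []
  | n + 1 => (n + 1) :: decList n

theorem decList_eq (n : ℕ) : decList n = ((List.range n).map (· + 1)).reverse := by
  induction n with
  | zero => rfl
  | succ n ih => simp [decList, ih, List.range_succ]

def minMaxWord : List Bool → ℕ → ℕ → List ℕ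
  | [], lo, _ => [lo]
  | true :: bs, lo, hi => hi :: minMaxWord bs lo (hi - 1)
  | false :: bs, lo, hi => lo :: minMaxWord bs (lo + 1) hi

theorem minMaxWord_perm (bs : List Bool) {lo hi : ℕ} (h : hi = lo + bs.length) :
    minMaxWord bs lo hi ~ List.range' lo (bs.length + 1) := by
  induction bs generalizing lo hi with
  | nil => simp [minMaxWord]
  | cons b bs ih =>
    simp only [List.length_cons] at h
    cases b
    · simpa [minMaxWord, List.range'_succ] using (ih (lo := lo + 1) (by omega)).cons lo
    · rw [minMaxWord, List.length_cons, List.range'_concat, show lo + 1 * (bs.length + 1) = hi by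
        omega]
      exact ((ih (by omega)).cons hi).trans (List.perm_append_singleton hi _).symm

theorem minMaxWord_inj {bs₁ bs₂ : List Bool} {lo hi : ℕ} (hlen : bs₁.length = bs₂.length)
    (h : hi = lo + bs₁.length) (heq : minMaxWord bs₁ lo hi = minMaxWord bs₂ lo hi) :
    bs₁ = bs₂ := by
  induction bs₁ generalizing bs₂ lo hi with
  | nil => exact (List.length_eq_zero_iff.mp hlen.symm).symm
  | cons b₁ bs₁ ih =>
    obtain _ | ⟨b₂, bs₂⟩ := bs₂
    · simp at hlen
    simp only [List.length_cons, Nat.add_right_cancel_iff] at hlen h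
    cases b₁ <;> cases b₂ <;> simp only [minMaxWord, List.cons.injEq] at heq
    · rw [ih hlen (by omega) heq.2]
    · omega
    · omega
    · rw [ih hlen (by omega) heq.2]

theorem exists_minMaxWord_eq_cons (bs : List Bool) {lo hi : ℕ} (h : lo ≤ hi) :
    ∃ b r, minMaxWord bs lo hi = b :: r ∧ lo ≤ b ∧ b ≤ hi := by
  obtain _ | ⟨_ | _, bs⟩ := bs
  · exact ⟨lo, [], rfl, le_rfl, h⟩
  · exact ⟨lo, _, rfl, le_rfl, h⟩
  · exact ⟨hi, _, rfl, h, le_rfl⟩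

theorem runOutput_decList_succ {m b h : ℕ} (r : List ℕ) (hb : m + 1 ≤ b) (hbh : b < h) :
    runOutput (b :: r) h (decList (m + 1)) = h :: runOutput (b :: r) (m + 1) (decList m) := by
  rw [runOutput_cons_of_pops (show Pops b h (decList (m + 1)) from ⟨hb, hbh⟩),
    runOutput_cons_of_not_pops (not_pops_of_le _ hb)]
  rfl

theorem runOutput_minMaxWord (bs : List Bool) {m hi : ℕ} (h : hi = m + 2 + bs.length) :
    runOutput (minMaxWord bs (m + 2) hi) (m + 1) (decList m) = decList hi := by
  induction bs generalizing m hi with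
  | nil =>
    subst h
    rw [minMaxWord, runOutput_cons_of_not_pops (not_pops_of_le _ (by omega))]
    rfl
  | cons b bs ih =>
    simp only [List.length_cons] at h
    cases b
    · rw [minMaxWord, runOutput_cons_of_not_pops (not_pops_of_le _ (by omega))]
      exact ih (m := m + 1) (by omega)
    · obtain ⟨c, r, hword, hc, hc'⟩ := exists_minMaxWord_eq_cons bs (lo := m + 2) (hi := hi - 1)
        (by omega)
      rw [minMaxWord, runOutput_cons_of_not_pops (not_pops_of_le _ (by omega)),
        show (m + 1) :: decList m = decList (m + 1) from rfl, hword,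
        runOutput_decList_succ r (by omega) (by omega), ← hword, ih (by omega),
        show hi = hi - 1 + 1 by omega]
      rfl

theorem SCc_231_one_cons_minMaxWord (bs : List Bool) {n : ℕ} (h : n = bs.length + 2) :
    SCc [2, 3, 1] (1 :: minMaxWord bs 2 n) = ((List.range n).map (· + 1)).reverse := by
  rw [SCc_231_cons, ← decList_eq]
  exact runOutput_minMaxWord bs (m := 0) (by omega)

theorem isPermList_one_cons_minMaxWord (bs : List Bool) {n : ℕ} (h : n = bs.length + 2) :
    IsPermList n (1 :: minMaxWord bs 2 n) := by
  have hrange : (List.range n).map (· + 1) = 1 :: List.range' 2 (bs.length + 1) := by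
    rw [List.map_congr_left fun x _ => Nat.add_comm x 1, ← List.range'_eq_map_range, h,
      List.range'_succ]
  rw [IsPermList, hrange]
  exact (minMaxWord_perm bs (by omega)).cons 1

theorem le_preCount_SCc_231_decreasing {n : ℕ} (hn : 2 ≤ n) :
    2 ^ (n - 2) ≤ preCount (SCc [2, 3, 1]) n ((List.range n).map (· + 1)).reverse := by
  calc 2 ^ (n - 2) = #(univ : Finset (List.Vector Bool (n - 2))) := by simp
    _ ≤ preCount (SCc [2, 3, 1]) n ((List.range n).map (· + 1)).reverse := by
      refine card_le_card_of_injOn (fun v => 1 :: minMaxWord v.toList 2 n) (fun v _ => ?_)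
        fun v₁ _ v₂ _ heq => ?_
      · have hv : n = v.toList.length + 2 := by rw [List.Vector.toList_length]; omega
        rw [coe_filter]
        exact ⟨mem_permsFinset.mpr (isPermList_one_cons_minMaxWord _ hv),
          SCc_231_one_cons_minMaxWord _ hv⟩
      · simp only [List.cons.injEq, true_and] at heq
        exact List.Vector.toList_injective
          (minMaxWord_inj (by simp) (by rw [List.Vector.toList_length]; omega) heq)

end SC231

/-- For n ≥ 2, max_{π ∈ S_n} |SC_{231}^{-1}(π)| = 2^{n−2}, and the
decreasing permutation n(n−1)⋯1 has at least 2^{n−2} preimages under SC_{231}. -/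
theorem max_preimages_sc231 (n : ℕ) (hn : 2 ≤ n) :
    (∀ π ∈ permsFinset n, preCount (SCc [2, 3, 1]) n π ≤ 2 ^ (n - 2)) ∧
    (∃ π ∈ permsFinset n, preCount (SCc [2, 3, 1]) n π = 2 ^ (n - 2)) ∧
    2 ^ (n - 2) ≤ preCount (SCc [2, 3, 1]) n (((List.range n).map (· + 1)).reverse) := by
  have hdec := SC231.le_preCount_SCc_231_decreasing hn
  refine ⟨fun π _ => SC231.preCount_SCc_231_le hn π,
    ⟨((List.range n).map (· + 1)).reverse, ?_, (SC231.preCount_SCc_231_le hn _).antisymm hdec⟩,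
    hdec⟩
  exact SC231.mem_permsFinset.mpr (List.reverse_perm _)
end
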